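/- Suppose a group Γ acts effectively on a set, and there is a constant C such that any finite cyclic group acting effectively has at most C elements, and a constant d bounding the rank of any elementary abelian p-group acting effectively. Then every finite group G acting effectively satisfies |G| ≤ [C^d (C^d)!]^C. -/

import Mathlib

/-!
Bound each Sylow `p`-subgroup `P` of `G`. A maximal normal abelian subgroup `A` of the `p`-group
`P` is self-centralizing, so conjugation embeds `P / A` into `Aut A` and `|P| ≤ |A| · |A|!`. The
abelian `p`-group `A` has exponent `p ^ e ≤ C`, and its `p`-torsion `A[p]` is some `(ℤ/p)^m` with
`m ≤ d`; as `|A| ≤ |A[p]| ^ e`, we get `|A| ≤ (p ^ e) ^ m ≤ C ^ d`. Finally `|G|` is the product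
of its Sylow orders over its prime divisors, and there are at most `C` of those, since each is the
order of an element.
-/

open Subgroup
open scoped IsMulCommutative

def PRankLE (p d : ℕ) (G : Type*) [Group G] : Prop :=
  ∀ (m : ℕ) (S : Subgroup G), Nonempty (S ≃* Multiplicative (Fin m → ZMod p)) → m ≤ d

theorem PRankLE.of_injective {p d : ℕ} {H G : Type*} [Group H] [Group G] {f : H →* G}
    (hf : Function.Injective f) (h : PRankLE p d G) : PRankLE p d H :=
  fun m S ⟨e⟩ => h m (S.map f) ⟨(S.equivMapOfInjective f hf).symm.trans e⟩

theorem orderOf_le_of_forall_card_le {Γ : Type*} [Group Γ] {C : ℕ}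
    (hC : ∀ H : Subgroup Γ, Finite H → IsCyclic H → Nat.card H ≤ C) (g : Γ) : orderOf g ≤ C := by
  by_cases hg : IsOfFinOrder g
  · rw [← Nat.card_zpowers]
    exact hC _ hg.finite_zpowers inferInstance
  · rw [orderOf_eq_zero hg]
    exact Nat.zero_le _

theorem card_le_card_ker_powMonoidHom_pow {A : Type*} [CommGroup A] [Finite A] (n e : ℕ)
    (h : ∀ a : A, a ^ n ^ e = 1) :
    Nat.card A ≤ Nat.card (powMonoidHom n : A →* A).ker ^ e := by
  induction e generalizing A with
  | zero =>
    have : Subsingleton A := ⟨fun a b => by simp_all⟩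
    simp [Nat.card_unique]
  | succ e ih =>
    set f : A →* A := powMonoidHom n
    have hrange : ∀ b : f.range, b ^ n ^ e = 1 := by
      rintro ⟨_, a, rfl⟩
      ext
      simpa [f, ← pow_mul, ← pow_succ'] using h a
    have hker : Nat.card (powMonoidHom n : f.range →* f.range).ker ≤ Nat.card f.ker := by
      rw [← card_map_of_injective f.range.subtype_injective]
      refine card_le_of_le ?_
      rintro _ ⟨x, hx, rfl⟩
      simpa [f, Subtype.ext_iff] using hx
    calc Nat.card A = Nat.card f.ker * Nat.card f.range := by
          rw [← index_ker f, f.ker.card_mul_index]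
      _ ≤ Nat.card f.ker * Nat.card f.ker ^ e :=
          Nat.mul_le_mul_left _ ((ih hrange).trans (Nat.pow_le_pow_left hker e))
      _ = Nat.card f.ker ^ (e + 1) := (pow_succ' _ _).symm

theorem exists_mulEquiv_of_forall_pow_eq_one {p : ℕ} [Fact p.Prime] {E : Type*} [CommGroup E]
    [Finite E] (h : ∀ x : E, x ^ p = 1) :
    ∃ m : ℕ, Nonempty (E ≃* Multiplicative (Fin m → ZMod p)) := by
  let inst : Module (ZMod p) (Additive E) :=
    AddCommGroup.zmodModule fun x => congrArg Additive.ofMul (h x.toMul)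
  have hfin : Module.Finite (ZMod p) (Additive E) := .of_finite
  let b := @Module.finBasis (ZMod p) (Additive E) _ _ inst (.of_divisionRing _ _) _ hfin
  exact ⟨_, ⟨(MulEquiv.multiplicativeAdditive E).symm.trans b.equivFun.toAddEquiv.toMultiplicative⟩⟩

theorem MulAut.ker_conjNormal {G : Type*} [Group G] (H : Subgroup G) [H.Normal] :
    (MulAut.conjNormal : G →* MulAut H).ker = centralizer H := by
  ext g
  simp only [MonoidHom.mem_ker, MulEquiv.ext_iff, Subtype.ext_iff, MulAut.conjNormal_apply,
    MulAut.one_apply, mem_centralizer_iff, SetLike.mem_coe, Subtype.forall, mul_inv_eq_iff_eq_mul]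
  exact forall₂_congr fun _ _ => eq_comm

theorem card_le_card_mul_factorial_of_centralizer_le {K : Type*} [Group K] [Finite K]
    (A : Subgroup K) [A.Normal] (hA : centralizer A ≤ A) :
    Nat.card K ≤ Nat.card A * (Nat.card A).factorial := by
  set φ : K →* MulAut A := MulAut.conjNormal
  have hrange : Nat.card φ.range ≤ (Nat.card A).factorial :=
    calc Nat.card φ.range ≤ Nat.card (MulAut A) :=
          Nat.card_le_card_of_injective _ Subtype.val_injective
      _ ≤ Nat.card (Equiv.Perm A) := Nat.card_le_card_of_injective _ MulEquiv.toEquiv_injective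
      _ = (Nat.card A).factorial := Nat.card_perm
  calc Nat.card K = Nat.card φ.ker * Nat.card φ.range := by
        rw [← index_ker φ, φ.ker.card_mul_index]
    _ ≤ Nat.card A * (Nat.card A).factorial := by
        refine Nat.mul_le_mul (card_le_of_le ?_) hrange
        rw [MulAut.ker_conjNormal]
        exact hA

theorem IsPGroup.exists_ne_one_mem_center_of_normal {p : ℕ} [Fact p.Prime] {G : Type*} [Group G]
    [Finite G] (hG : IsPGroup p G) {N : Subgroup G} [N.Normal] (hN : N ≠ ⊥) :
    ∃ z ∈ N, z ∈ center G ∧ z ≠ 1 := by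
  have hpN : p ∣ Nat.card N := by
    have : Nontrivial N := N.nontrivial_iff_ne_bot.mpr hN
    obtain ⟨n, hn, hcard⟩ := (hG.to_subgroup N).nontrivial_iff_card.mp this
    exact hcard ▸ dvd_pow_self p hn.ne'
  obtain ⟨z, hz, hz1⟩ := (hG.of_equiv ConjAct.toConjAct)
    |>.exists_fixed_point_of_prime_dvd_card_of_fixed_point N hpN (a := 1) fun g => smul_one g
  refine ⟨z, z.2, mem_center_iff.mpr fun g => ?_, fun h => hz1 (Subtype.ext h).symm⟩
  have := congrArg Subtype.val (hz (ConjAct.toConjAct g))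
  simp only [ConjAct.Subgroup.val_conj_smul, ConjAct.smul_def, ConjAct.ofConjAct_toConjAct] at this
  exact mul_inv_eq_iff_eq_mul.mp this

theorem IsPGroup.centralizer_le_of_maximal {p : ℕ} [Fact p.Prime] {K : Type*} [Group K] [Finite K]
    (hK : IsPGroup p K) {A : Subgroup K}
    (hA : Maximal (fun B : Subgroup K => B.Normal ∧ IsMulCommutative B) A) :
    centralizer A ≤ A := by
  obtain ⟨hAn, hAc⟩ := hA.prop
  -- Otherwise some `y ∈ C_K(A) \ A` is central modulo `A`, and `⟨y⟩A` is a larger normal abelian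
  -- subgroup.
  by_contra hle
  have hN : (centralizer A).map (QuotientGroup.mk' A) ≠ ⊥ := by
    rwa [Ne, Subgroup.map_eq_bot_iff, QuotientGroup.ker_mk']
  obtain ⟨_, ⟨y, hyA, rfl⟩, hcenter, hy1⟩ :=
    (hK.to_quotient A).exists_ne_one_mem_center_of_normal hN
  set B := comap (QuotientGroup.mk' A) (zpowers (QuotientGroup.mk' A y)) with hB_def
  have hB : B = zpowers y ⊔ A := by
    rw [hB_def, ← MonoidHom.map_zpowers, comap_map_eq, QuotientGroup.ker_mk']
  have hBn : B.Normal := by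
    have : (zpowers (QuotientGroup.mk' A y)).Normal :=
      ⟨fun n hn g => by rwa [mem_center_iff.mp (zpowers_le.mpr hcenter hn) g, mul_inv_cancel_right]⟩
    exact this.comap _
  have hBc : IsMulCommutative B := by
    rw [hB, zpowers_eq_closure, ← closure_eq A, ← Subgroup.closure_union]
    refine isMulCommutative_closure ?_
    rintro a (rfl | ha) b (rfl | hb)
    · rfl
    · exact (mem_centralizer_iff.mp hyA b hb).symm
    · exact mem_centralizer_iff.mp hyA a ha
    · exact setLike_mul_comm ha hb
  have hyB : y ∈ B := hB ▸ mem_sup_left (mem_zpowers y)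
  exact hy1 ((QuotientGroup.eq_one_iff y).mpr (hA.2 ⟨hBn, hBc⟩ (hB ▸ le_sup_right) hyB))

theorem card_le_pow_of_orderOf_le_of_pRankLE {p C d : ℕ} [Fact p.Prime] {A : Type*} [CommGroup A]
    [Finite A] (hA : IsPGroup p A) (horder : ∀ a : A, orderOf a ≤ C) (hrank : PRankLE p d A) :
    Nat.card A ≤ C ^ d := by
  obtain ⟨g, hg⟩ := Monoid.exists_orderOf_eq_exponent (Monoid.ExponentExists.of_finite (G := A))
  obtain ⟨e, he⟩ := IsPGroup.iff_orderOf.mp hA g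
  have hexp : ∀ a : A, a ^ p ^ e = 1 := fun a => by
    rw [← he, hg]
    exact Monoid.pow_exponent_eq_one a
  have hΩ : ∀ x : (powMonoidHom p : A →* A).ker, x ^ p = 1 := fun x => Subtype.ext x.2
  obtain ⟨m, ⟨eΩ⟩⟩ := exists_mulEquiv_of_forall_pow_eq_one hΩ
  calc Nat.card A ≤ Nat.card (powMonoidHom p : A →* A).ker ^ e :=
        card_le_card_ker_powMonoidHom_pow p e hexp
    _ = (p ^ e) ^ m := by rw [Nat.card_congr eΩ.toEquiv]; simp [← pow_mul, mul_comm]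
    _ ≤ C ^ m := Nat.pow_le_pow_left (he ▸ horder g) m
    _ ≤ C ^ d := Nat.pow_le_pow_right ((orderOf_pos g).trans_le (horder g)) (hrank m _ ⟨eΩ⟩)

theorem IsPGroup.card_le_of_orderOf_le_of_pRankLE {p C d : ℕ} [Fact p.Prime] {K : Type*} [Group K]
    [Finite K] (hK : IsPGroup p K) (horder : ∀ g : K, orderOf g ≤ C) (hrank : PRankLE p d K) :
    Nat.card K ≤ C ^ d * (C ^ d).factorial := by
  obtain ⟨A, -, hA⟩ := Finite.exists_le_maximal
    (p := fun B : Subgroup K => B.Normal ∧ IsMulCommutative B) (a := ⊥)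
    ⟨inferInstance, inferInstance⟩
  obtain ⟨hAn, hAc⟩ := hA.prop
  have hcard : Nat.card A ≤ C ^ d :=
    card_le_pow_of_orderOf_le_of_pRankLE (hK.to_subgroup A)
      (fun a => (orderOf_injective A.subtype A.subtype_injective a).ge.trans (horder a))
      (hrank.of_injective A.subtype_injective)
  calc Nat.card K ≤ Nat.card A * (Nat.card A).factorial :=
        card_le_card_mul_factorial_of_centralizer_le A (hK.centralizer_le_of_maximal hA)
    _ ≤ C ^ d * (C ^ d).factorial := Nat.mul_le_mul hcard (Nat.factorial_le hcard)

theorem card_le_pow_of_card_sylow_le {G : Type*} [Group G] [Finite G] {B C : ℕ}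
    (horder : ∀ g : G, orderOf g ≤ C)
    (hsylow : ∀ (p : ℕ) [Fact p.Prime] (P : Sylow p G), Nat.card P ≤ B) :
    Nat.card G ≤ B ^ C := by
  set n := Nat.card G
  have hB : 1 ≤ B := Nat.card_pos.trans_le (hsylow 2 default)
  have hprimePow : ∀ q ∈ n.primeFactors, q ^ n.factorization q ≤ B := fun q hq => by
    have : Fact q.Prime := ⟨Nat.prime_of_mem_primeFactors hq⟩
    exact (Sylow.card_eq_multiplicity (default : Sylow q G)).symm.trans_le (hsylow q default)
  have hprimeFactors : n.primeFactors.card ≤ C := by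
    refine (Finset.card_le_card fun q hq => ?_).trans (Nat.card_Icc 1 C).le
    have : Fact q.Prime := ⟨Nat.prime_of_mem_primeFactors hq⟩
    obtain ⟨g, hg⟩ := exists_prime_orderOf_dvd_card' (G := G) q (Nat.dvd_of_mem_primeFactors hq)
    exact Finset.mem_Icc.mpr ⟨(Nat.prime_of_mem_primeFactors hq).one_le, hg ▸ horder g⟩
  calc n = ∏ q ∈ n.primeFactors, q ^ n.factorization q :=
        Nat.prod_primeFactors_pow_factorization Nat.card_pos.ne'
    _ ≤ ∏ _q ∈ n.primeFactors, B := Finset.prod_le_prod' hprimePow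
    _ = B ^ n.primeFactors.card := Finset.prod_const B
    _ ≤ B ^ C := Nat.pow_le_pow_right hB hprimeFactors

/-- Suppose effective actions on a set `X` (identified with subgroups of `Equiv.Perm X`)
satisfy: any finite cyclic group acting effectively has at most `C` elements, and any
elementary abelian `p`-group `(ℤ/p)^m` acting effectively has `m ≤ d`.  Then every finite
group `G` acting effectively on `X` satisfies `|G| ≤ (C^d * (C^d)!)^C`. -/
theorem stmt15 (X : Type) (C d : ℕ)
    (hC : ∀ H : Subgroup (Equiv.Perm X), Finite H → IsCyclic H → Nat.card H ≤ C)
    (hd : ∀ (p m : ℕ), p.Prime → ∀ H : Subgroup (Equiv.Perm X),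
      Nonempty (H ≃* Multiplicative (Fin m → ZMod p)) → m ≤ d)
    (G : Subgroup (Equiv.Perm X)) (hG : Finite G) :
    Nat.card G ≤ (C ^ d * Nat.factorial (C ^ d)) ^ C := by
  have horder : ∀ g : Equiv.Perm X, orderOf g ≤ C := orderOf_le_of_forall_card_le hC
  refine card_le_pow_of_card_sylow_le
    (fun g => (orderOf_injective G.subtype G.subtype_injective g).ge.trans (horder g))
    fun p _ P => ?_
  have hinj : Function.Injective (G.subtype.comp (P : Subgroup G).subtype) :=
    G.subtype_injective.comp (P : Subgroup G).subtype_injective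
  exact P.isPGroup'.card_le_of_orderOf_le_of_pRankLE
    (fun g => (orderOf_injective _ hinj g).ge.trans (horder _))
    (PRankLE.of_injective hinj fun m H => hd p m Fact.out H)
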